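/- arXiv:2005.00940 — 4 statements merged into one kernel-verified Lean document; each statement's English description precedes it below -/
import Mathlib

section
/- Let A, D, Π be real n×n matrices with D, Π symmetric, let B be n×m, C be m×n, let Q, R be real symmetric m×m matrices, let L be a real m×m matrix, and let μ ≥ 0 and ε ∈ ℝ. For ζ ∈ ℤ define the symmetric (n+m)×(n+m) block matrix Θ(ζ) with top-left block (A − ζ²D)ᵀΠ + Π(A − ζ²D) + 2μΠ − CᵀQC + εIₙ, top-right block ΠB − CᵀL, bottom-left block BᵀΠ − LᵀC, and bottom-right block −R. Then Θ(ζ) is negative semidefinite for every ζ ∈ ℤ with ζ ≠ 0 if and only if ΠD + DᵀΠ is positive semidefinite and Θ(1) is negative semidefinite. -/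
open Matrix

/-- The symmetric block matrix `Θ(ζ)` appearing in the family of LMIs of
Theorem 5 of the paper. -/
noncomputable def ThetaMat (n m : ℕ)
    (A D Pm : Matrix (Fin n) (Fin n) ℝ)
    (B : Matrix (Fin n) (Fin m) ℝ) (C : Matrix (Fin m) (Fin n) ℝ)
    (Q R L : Matrix (Fin m) (Fin m) ℝ) (μ ε : ℝ) (ζ : ℤ) :
    Matrix (Fin n ⊕ Fin m) (Fin n ⊕ Fin m) ℝ :=
  Matrix.fromBlocks
    ((A - (ζ : ℝ) ^ 2 • D)ᵀ * Pm + Pm * (A - (ζ : ℝ) ^ 2 • D)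
      + (2 * μ) • Pm - Cᵀ * Q * C + ε • (1 : Matrix (Fin n) (Fin n) ℝ))
    (Pm * B - Cᵀ * L)
    (Bᵀ * Pm - Lᵀ * C)
    (-R)

lemma fromBlocks_sub' {n m : ℕ}
    (A A' : Matrix (Fin n) (Fin n) ℝ) (B B' : Matrix (Fin n) (Fin m) ℝ)
    (C C' : Matrix (Fin m) (Fin n) ℝ) (D D' : Matrix (Fin m) (Fin m) ℝ) :
    Matrix.fromBlocks A B C D - Matrix.fromBlocks A' B' C' D'
      = Matrix.fromBlocks (A - A') (B - B') (C - C') (D - D') := by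
  simp only [sub_eq_add_neg, ← Matrix.fromBlocks_neg, ← Matrix.fromBlocks_add]

/-- Decomposition of `Θ(ζ)` as `Θ(1)` minus `(ζ²-1)` times the block-diagonal
matrix with top-left block `DᵀΠ + ΠD`. -/
lemma thetaMat_decomp (n m : ℕ)
    (A D Pm : Matrix (Fin n) (Fin n) ℝ)
    (B : Matrix (Fin n) (Fin m) ℝ) (C : Matrix (Fin m) (Fin n) ℝ)
    (Q R L : Matrix (Fin m) (Fin m) ℝ) (μ ε : ℝ) (ζ : ℤ) :
    ThetaMat n m A D Pm B C Q R L μ ε ζ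
      = ThetaMat n m A D Pm B C Q R L μ ε 1
        - ((ζ : ℝ) ^ 2 - 1) •
          Matrix.fromBlocks (Dᵀ * Pm + Pm * D) 0 0 0 := by
  have htl : (A - (ζ:ℝ)^2 • D)ᵀ * Pm + Pm * (A - (ζ:ℝ)^2 • D)
        + (2 * μ) • Pm - Cᵀ * Q * C + ε • (1 : Matrix (Fin n) (Fin n) ℝ)
      = ((A - (1:ℝ) • D)ᵀ * Pm + Pm * (A - (1:ℝ) • D)
          + (2 * μ) • Pm - Cᵀ * Q * C + ε • (1 : Matrix (Fin n) (Fin n) ℝ))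
        - ((ζ:ℝ)^2 - 1) • (Dᵀ * Pm + Pm * D) := by
    simp only [transpose_sub, transpose_smul, sub_mul, mul_sub, smul_mul_assoc,
      Matrix.mul_smul, smul_add, sub_smul, one_smul]
    module
  unfold ThetaMat
  rw [Matrix.fromBlocks_smul, fromBlocks_sub']
  simp only [smul_zero, sub_zero, Int.cast_one, one_pow]
  rw [htl]

lemma quadform_blockdiag (n m : ℕ) (N : Matrix (Fin n) (Fin n) ℝ)
    (z : Fin n ⊕ Fin m → ℝ) :
    z ⬝ᵥ ((Matrix.fromBlocks N 0 0 0 : Matrix (Fin n ⊕ Fin m) (Fin n ⊕ Fin m) ℝ) *ᵥ z)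
      = (z ∘ Sum.inl) ⬝ᵥ (N *ᵥ (z ∘ Sum.inl)) := by
  obtain ⟨x, y, rfl⟩ : ∃ x y, z = Sum.elim x y :=
    ⟨_, _, (Sum.elim_comp_inl_inr z).symm⟩
  rw [Matrix.fromBlocks_mulVec]
  simp [sumElim_dotProduct_sumElim]

/-- `Θ(ζ)` is negative semidefinite for every nonzero integer `ζ`
iff `ΠD + DᵀΠ` is positive semidefinite and `Θ(1)` is negative semidefinite. -/
theorem theta_family_negSemidef_iff
    (n m : ℕ) (A D Pm : Matrix (Fin n) (Fin n) ℝ)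
    (B : Matrix (Fin n) (Fin m) ℝ) (C : Matrix (Fin m) (Fin n) ℝ)
    (Q R : Matrix (Fin m) (Fin m) ℝ) (L : Matrix (Fin m) (Fin m) ℝ)
    (hD : D.IsSymm) (hPm : Pm.IsSymm) (hQ : Q.IsSymm) (hR : R.IsSymm)
    (μ : ℝ) (hμ : 0 ≤ μ) (ε : ℝ) :
    (∀ ζ : ℤ, ζ ≠ 0 →
      ∀ z : Fin n ⊕ Fin m → ℝ, z ⬝ᵥ (ThetaMat n m A D Pm B C Q R L μ ε ζ *ᵥ z) ≤ 0) ↔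
    ((∀ v : Fin n → ℝ, 0 ≤ v ⬝ᵥ ((Pm * D + Dᵀ * Pm) *ᵥ v)) ∧
     (∀ z : Fin n ⊕ Fin m → ℝ, z ⬝ᵥ (ThetaMat n m A D Pm B C Q R L μ ε 1 *ᵥ z) ≤ 0)) := by
  have hcomm : Pm * D + Dᵀ * Pm = Dᵀ * Pm + Pm * D := add_comm _ _
  have key : ∀ (ζ : ℤ) (z : Fin n ⊕ Fin m → ℝ),
      z ⬝ᵥ (ThetaMat n m A D Pm B C Q R L μ ε ζ *ᵥ z)
        = z ⬝ᵥ (ThetaMat n m A D Pm B C Q R L μ ε 1 *ᵥ z)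
          - ((ζ : ℝ) ^ 2 - 1) *
            ((z ∘ Sum.inl) ⬝ᵥ ((Dᵀ * Pm + Pm * D) *ᵥ (z ∘ Sum.inl))) := by
    intro ζ z
    rw [thetaMat_decomp, Matrix.sub_mulVec, dotProduct_sub,
      Matrix.smul_mulVec, dotProduct_smul, smul_eq_mul,
      quadform_blockdiag]
  constructor
  · rintro h
    constructor
    · intro v
      by_contra hv
      push_neg at hv
      set w := v ⬝ᵥ ((Pm * D + Dᵀ * Pm) *ᵥ v) with hw
      -- take z with first block v, second block 0
      set z : Fin n ⊕ Fin m → ℝ := Sum.elim v 0 with hzdef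
      have hzl : z ∘ Sum.inl = v := rfl
      set c : ℝ := z ⬝ᵥ (ThetaMat n m A D Pm B C Q R L μ ε 1 *ᵥ z) with hc
      have hwpos : 0 < -w := by linarith
      -- choose large ζ
      obtain ⟨k, hk⟩ := exists_nat_gt ((-c) / (-w) + 1)
      set K : ℝ := (k : ℝ) + 1 with hKdef
      have hK1 : (1:ℝ) ≤ K := by
        have : (0:ℝ) ≤ (k:ℝ) := Nat.cast_nonneg k
        rw [hKdef]; linarith
      have hkK : (-c) / (-w) + 1 < K := by
        have : (k:ℝ) < K := by simp [hKdef]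
        linarith
      have hKbig : -c < (K - 1) * (-w) := by
        have h' : (-c) / (-w) < K - 1 := by linarith
        exact (div_lt_iff₀ hwpos).mp h'
      have hle := h ((k : ℤ) + 1) (by omega) z
      rw [key, hzl, ← hcomm, ← hw, ← hc] at hle
      have hcast : (((k : ℤ) + 1 : ℤ) : ℝ) = K := by push_cast [hKdef]; ring
      rw [hcast] at hle
      nlinarith [mul_nonneg (mul_nonneg (by linarith : (0:ℝ) ≤ K)
        (by linarith : (0:ℝ) ≤ K - 1)) hwpos.le]
    · exact h 1 one_ne_zero
  · rintro ⟨hpos, hone⟩ ζ hζ z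
    rw [key]
    have h1 : (1:ℝ) ≤ ((ζ:ℝ))^2 := by
      have h0 : (1:ℤ) ≤ |ζ| := Int.one_le_abs hζ
      have h0' : (1:ℝ) ≤ |(ζ:ℝ)| := by exact_mod_cast h0
      nlinarith [sq_abs (ζ:ℝ)]
    have h2 : 0 ≤ (z ∘ Sum.inl) ⬝ᵥ ((Dᵀ * Pm + Pm * D) *ᵥ (z ∘ Sum.inl)) := by
      rw [← hcomm]; exact hpos _
    nlinarith [hone z]
end

section
/- Let A, D, Π be real n×n matrices with D, Π symmetric, Π positive definite and ΠD + DᵀΠ positive semidefinite; let B be n×m, C be m×n; let Q, R be real symmetric m×m matrices and L a real m×m matrix; let μ ≥ 0 and ε > 0. Suppose the symmetric block matrix with top-left block (A − D)ᵀΠ + Π(A − D) + 2μΠ − CᵀQC + εIₙ, top-right block ΠB − CᵀL, bottom-left block BᵀΠ − LᵀC, and bottom-right block −R is negative semidefinite. Then for every twice continuously differentiable 2π-periodic function v : ℝ → ℝⁿ with v′ also 2π-periodic and ∫₀^{2π} v(θ) dθ = 0, and every continuous 2π-periodic u : ℝ → ℝᵐ, one has ∫₀^{2π} [ 2 v(θ)ᵀ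 Π (D v″(θ) + A v(θ) + B u(θ)) + 2μ v(θ)ᵀΠv(θ) + ε|v(θ)|² ] dθ ≤ ∫₀^{2π} σ(C v(θ), u(θ)) dθ, where σ(y, w) := yᵀQy + 2yᵀLw + wᵀRw. -/
/-!
Write `S = ΠD + DᵀΠ`. Pointwise, the LMI bounds the part of the integrand not involving `v″` by
`σ(Cv, u) + vᵀSv`. Integrating by parts over a period turns `∫ 2 vᵀΠDv″` into `-∫ v′ᵀSv′`, and the
Wirtinger inequality `∫ vᵀSv ≤ ∫ v′ᵀSv′` for zero-mean periodic `v` (proved componentwise after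
writing the quadratic form of `S ≥ 0` as a sum of squares, via Parseval and `ĉₙ(v′) = in ĉₙ(v)`)
absorbs the remaining term.
-/

open Matrix MeasureTheory Complex Set

variable {ι κ : Type*} [Fintype ι] [Fintype κ]

theorem Matrix.IsSymm.mulVec_dotProduct {R : Type*} [CommSemiring R] {P : Matrix ι ι R}
    (hP : P.IsSymm) (x y : ι → R) : (P *ᵥ x) ⬝ᵥ y = x ⬝ᵥ (P *ᵥ y) := by
  rw [dotProduct_comm, ← dotProduct_transpose_mulVec, hP.eq]

theorem dotProduct_add_transpose_mulVec_self {R : Type*} [CommSemiring R] (M : Matrix ι ι R)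
    (x : ι → R) : x ⬝ᵥ ((M + Mᵀ) *ᵥ x) = 2 * (x ⬝ᵥ (M *ᵥ x)) := by
  rw [add_mulVec, dotProduct_add, dotProduct_transpose_mulVec]
  ring

open scoped MatrixOrder in
theorem Matrix.PosSemidef.exists_dotProduct_mulVec_eq_sum_sq {S : Matrix ι ι ℝ}
    (hS : S.PosSemidef) : ∃ B : Matrix ι ι ℝ, ∀ x, x ⬝ᵥ (S *ᵥ x) = ∑ i, (B *ᵥ x) i ^ 2 := by
  classical
  obtain ⟨B, hB, hBsymm⟩ : ∃ B : Matrix ι ι ℝ, B * B = S ∧ B.IsSymm :=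
    ⟨CFC.sqrt S, CFC.sqrt_mul_sqrt_self S hS.nonneg, (CFC.sqrt_nonneg S).posSemidef.isHermitian⟩
  refine ⟨B, fun x => ?_⟩
  rw [← hB, ← mulVec_mulVec, ← hBsymm.mulVec_dotProduct]
  simp only [dotProduct, sq]

theorem sumElim_dotProduct_fromBlocks_mulVec_sumElim {R : Type*} [CommSemiring R]
    (A : Matrix ι ι R) (B : Matrix ι κ R) (C : Matrix κ ι R) (D : Matrix κ κ R)
    (x : ι → R) (y : κ → R) :
    Sum.elim x y ⬝ᵥ (fromBlocks A B C D *ᵥ Sum.elim x y)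
      = x ⬝ᵥ (A *ᵥ x) + x ⬝ᵥ (B *ᵥ y) + y ⬝ᵥ (C *ᵥ x) + y ⬝ᵥ (D *ᵥ y) := by
  rw [fromBlocks_mulVec, sumElim_dotProduct_sumElim]
  simp only [Sum.elim_comp_inl, Sum.elim_comp_inr, dotProduct_add]
  ring

theorem HasDerivAt.dotProduct {𝕜 : Type*} [NontriviallyNormedField 𝕜] {f g : 𝕜 → ι → 𝕜}
    {f' g' : ι → 𝕜} {x : 𝕜} (hf : HasDerivAt f f' x) (hg : HasDerivAt g g' x) :
    HasDerivAt (fun y => f y ⬝ᵥ g y) (f' ⬝ᵥ g x + f x ⬝ᵥ g') x := by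
  simp only [_root_.dotProduct, ← Finset.sum_add_distrib]
  exact HasDerivAt.fun_sum fun i _ => (hasDerivAt_pi.1 hf i).fun_mul (hasDerivAt_pi.1 hg i)

theorem HasDerivAt.matrix_mulVec {𝕜 : Type*} [NontriviallyNormedField 𝕜] {m : Type*}
    (M : Matrix m ι 𝕜) {f : 𝕜 → ι → 𝕜} {f' : ι → 𝕜} {x : 𝕜} (hf : HasDerivAt f f' x) :
    HasDerivAt (fun y => M *ᵥ f y) (M *ᵥ f') x :=
  hasDerivAt_pi.2 fun i => by
    simpa [mulVec] using (hasDerivAt_const x (M i)).dotProduct hf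

theorem integral_dotProduct_mulVec_second_deriv_eq_neg (M : Matrix ι ι ℝ) {a b : ℝ}
    {v v' v'' : ℝ → ι → ℝ} (hv : ∀ x, HasDerivAt v (v' x) x) (hv' : ∀ x, HasDerivAt v' (v'' x) x)
    (hv'' : Continuous v'') (hvab : v a = v b) (hv'ab : v' a = v' b) :
    ∫ x in a..b, v x ⬝ᵥ (M *ᵥ v'' x) = -∫ x in a..b, v' x ⬝ᵥ (M *ᵥ v' x) := by
  have hcv : Continuous v := continuous_iff_continuousAt.mpr fun x => (hv x).continuousAt
  have hcv' : Continuous v' := continuous_iff_continuousAt.mpr fun x => (hv' x).continuousAt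
  have hparts := intervalIntegral.integral_eq_sub_of_hasDerivAt
    (fun x _ => (hv x).dotProduct ((hv' x).matrix_mulVec M)) ((by fun_prop : Continuous fun x =>
      v' x ⬝ᵥ (M *ᵥ v' x) + v x ⬝ᵥ (M *ᵥ v'' x)).intervalIntegrable a b)
  rw [hvab, hv'ab, sub_self, intervalIntegral.integral_add
    ((by fun_prop : Continuous _).intervalIntegrable a b)
    ((by fun_prop : Continuous _).intervalIntegrable a b)] at hparts
  linarith

theorem Continuous.memLp_two_restrict_Ioc {E : Type*} [NormedAddCommGroup E] {f : ℝ → E}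
    (hf : Continuous f) (a b : ℝ) :
    MemLp f 2 (volume.restrict (Ioc a b)) := by
  rw [memLp_two_iff_integrable_sq_norm hf.aestronglyMeasurable]
  exact (hf.norm.pow 2).integrableOn_Ioc

theorem norm_fourierCoeffOn_le_of_hasDerivAt {a b : ℝ} (hab : a < b) {f f' : ℝ → ℂ}
    (hf : ∀ x, HasDerivAt f (f' x) x) (hf' : Continuous f') (hfab : f a = f b) {n : ℤ}
    (hn : n ≠ 0) :
    ‖fourierCoeffOn hab f n‖ ≤ (b - a) / (2 * Real.pi) * ‖fourierCoeffOn hab f' n‖ := by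
  have h := fourierCoeffOn_of_hasDerivAt hab hn (fun x _ => hf x) (hf'.intervalIntegrable a b)
  rw [hfab, sub_self, mul_zero, zero_sub, ← ofReal_sub] at h
  have key : ‖fourierCoeffOn hab f n‖ * (2 * Real.pi * |(n : ℝ)|)
      = (b - a) * ‖fourierCoeffOn hab f' n‖ := by
    have hn' : (n : ℝ) ≠ 0 := Int.cast_ne_zero.mpr hn
    simp only [h, norm_mul, norm_div, norm_neg, norm_one, norm_I, norm_real, norm_intCast,
      norm_ofNat, Real.norm_eq_abs, abs_of_pos Real.pi_pos, abs_of_pos (sub_pos.mpr hab)]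
    field_simp
  have hn1 : (1 : ℝ) ≤ |(n : ℝ)| := by exact_mod_cast Int.one_le_abs hn
  rw [div_mul_eq_mul_div, le_div_iff₀ (by positivity), ← key]
  exact mul_le_mul_of_nonneg_left (le_mul_of_one_le_right (by positivity) hn1) (norm_nonneg _)

theorem integral_norm_sq_le_of_hasDerivAt_of_integral_eq_zero {a b : ℝ} (hab : a < b)
    {f f' : ℝ → ℂ} (hf : ∀ x, HasDerivAt f (f' x) x) (hf' : Continuous f')
    (hfab : f a = f b) (hmean : ∫ x in a..b, f x = 0) :
    ∫ x in a..b, ‖f x‖ ^ 2 ≤ ((b - a) / (2 * Real.pi)) ^ 2 * ∫ x in a..b, ‖f' x‖ ^ 2 := by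
  have hcont : Continuous f := continuous_iff_continuousAt.mpr fun x => (hf x).continuousAt
  have hcoeff : ∀ n, ‖fourierCoeffOn hab f n‖ ^ 2
      ≤ ((b - a) / (2 * Real.pi)) ^ 2 * ‖fourierCoeffOn hab f' n‖ ^ 2 := by
    intro n
    rcases eq_or_ne n 0 with rfl | hn
    · have hc0 : fourierCoeffOn hab f 0 = 0 := by simp [fourierCoeffOn_eq_integral, hmean]
      rw [hc0, norm_zero, sq, zero_mul]
      positivity
    · rw [← mul_pow]
      exact pow_le_pow_left₀ (norm_nonneg _)
        (norm_fourierCoeffOn_le_of_hasDerivAt hab hf hf' hfab hn) 2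
  have hparseval := hasSum_le hcoeff
    (hasSum_sq_fourierCoeffOn hab (hcont.memLp_two_restrict_Ioc a b))
    ((hasSum_sq_fourierCoeffOn hab (hf'.memLp_two_restrict_Ioc a b)).mul_left _)
  rw [smul_eq_mul, smul_eq_mul, mul_left_comm] at hparseval
  exact le_of_mul_le_mul_left hparseval (inv_pos.mpr (sub_pos.mpr hab))

theorem integral_sq_le_of_hasDerivAt_of_integral_eq_zero {a b : ℝ} (hab : a < b)
    {f f' : ℝ → ℝ} (hf : ∀ x, HasDerivAt f (f' x) x) (hf' : Continuous f')
    (hfab : f a = f b) (hmean : ∫ x in a..b, f x = 0) :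
    ∫ x in a..b, f x ^ 2 ≤ ((b - a) / (2 * Real.pi)) ^ 2 * ∫ x in a..b, f' x ^ 2 := by
  have h := integral_norm_sq_le_of_hasDerivAt_of_integral_eq_zero hab
    (fun x => (hf x).ofReal_comp) (continuous_ofReal.comp hf') (by simp only [hfab])
    (by rw [intervalIntegral.integral_ofReal, hmean, ofReal_zero])
  simpa only [norm_real, Real.norm_eq_abs, sq_abs] using h

theorem integral_dotProduct_mulVec_le_of_posSemidef {S : Matrix ι ι ℝ} (hS : S.PosSemidef)
    {a b : ℝ} (hab : a < b) {v v' : ℝ → ι → ℝ} (hv : ∀ x, HasDerivAt v (v' x) x)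
    (hv' : Continuous v') (hvab : v a = v b) (hmean : ∫ x in a..b, v x = 0) :
    ∫ x in a..b, v x ⬝ᵥ (S *ᵥ v x)
      ≤ ((b - a) / (2 * Real.pi)) ^ 2 * ∫ x in a..b, v' x ⬝ᵥ (S *ᵥ v' x) := by
  obtain ⟨B, hB⟩ := hS.exists_dotProduct_mulVec_eq_sum_sq
  have hcv : Continuous v := continuous_iff_continuousAt.mpr fun x => (hv x).continuousAt
  simp_rw [hB]
  rw [intervalIntegral.integral_finsetSum fun i _ =>
      (by fun_prop : Continuous _).intervalIntegrable a b,
    intervalIntegral.integral_finsetSum fun i _ =>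
      (by fun_prop : Continuous _).intervalIntegrable a b,
    Finset.mul_sum]
  gcongr with i
  let Bi : (ι → ℝ) →L[ℝ] ℝ := (ContinuousLinearMap.proj i).comp B.mulVecLin.toContinuousLinearMap
  refine integral_sq_le_of_hasDerivAt_of_integral_eq_zero hab
    (fun x => Bi.hasFDerivAt.comp_hasDerivAt x (hv x)) (Bi.continuous.comp hv')
    (by simp only [hvab]) ?_
  exact (Bi.intervalIntegral_comp_comm (hcv.intervalIntegrable a b)).trans
    (by rw [hmean, map_zero])

/-- The derivative of the storage `xᵀPx` along `ẋ = f`, with the exponential rate `μ` and the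
strictness margin `ε` of the paper. -/
abbrev storageRate (P : Matrix ι ι ℝ) (μ ε : ℝ) (x f : ι → ℝ) : ℝ :=
  2 * (x ⬝ᵥ (P *ᵥ f)) + 2 * μ * (x ⬝ᵥ (P *ᵥ x)) + ε * (x ⬝ᵥ x)

abbrev supplyRate (Q L R : Matrix κ κ ℝ) (y w : κ → ℝ) : ℝ :=
  y ⬝ᵥ (Q *ᵥ y) + 2 * (y ⬝ᵥ (L *ᵥ w)) + w ⬝ᵥ (R *ᵥ w)

def dissipationLMIMatrix [DecidableEq ι] (A D P : Matrix ι ι ℝ) (B : Matrix ι κ ℝ)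
    (C : Matrix κ ι ℝ) (Q R L : Matrix κ κ ℝ) (μ ε : ℝ) : Matrix (ι ⊕ κ) (ι ⊕ κ) ℝ :=
  fromBlocks ((A - D)ᵀ * P + P * (A - D) + (2 * μ) • P - Cᵀ * Q * C + ε • (1 : Matrix ι ι ℝ))
    (P * B - Cᵀ * L) (Bᵀ * P - Lᵀ * C) (-R)

theorem storageRate_add (P : Matrix ι ι ℝ) (μ ε : ℝ) (x g f : ι → ℝ) :
    storageRate P μ ε x (g + f) = 2 * (x ⬝ᵥ (P *ᵥ g)) + storageRate P μ ε x f := by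
  simp only [storageRate, mulVec_add, dotProduct_add]
  ring

theorem integral_storageRate_diffusion_add {P D : Matrix ι ι ℝ} (hP : P.IsSymm) (μ ε : ℝ)
    {a b : ℝ} {v v' v'' f : ℝ → ι → ℝ} (hv : ∀ x, HasDerivAt v (v' x) x)
    (hv' : ∀ x, HasDerivAt v' (v'' x) x) (hv'' : Continuous v'') (hf : Continuous f)
    (hvab : v a = v b) (hv'ab : v' a = v' b) :
    ∫ x in a..b, storageRate P μ ε (v x) (D *ᵥ v'' x + f x)
      = -(∫ x in a..b, v' x ⬝ᵥ ((P * D + Dᵀ * P) *ᵥ v' x))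
        + ∫ x in a..b, storageRate P μ ε (v x) (f x) := by
  have hcv : Continuous v := continuous_iff_continuousAt.mpr fun x => (hv x).continuousAt
  have hS : P * D + Dᵀ * P = P * D + (P * D)ᵀ := by rw [transpose_mul, hP.eq]
  simp only [storageRate_add, hS, dotProduct_add_transpose_mulVec_self, mulVec_mulVec]
  rw [intervalIntegral.integral_add ((by fun_prop : Continuous _).intervalIntegrable a b)
      ((by fun_prop : Continuous _).intervalIntegrable a b),
    intervalIntegral.integral_const_mul, intervalIntegral.integral_const_mul,
    integral_dotProduct_mulVec_second_deriv_eq_neg (P * D) hv hv' hv'' hvab hv'ab]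
  ring

theorem storageRate_le_supplyRate_of_lmi [DecidableEq ι] {A D P : Matrix ι ι ℝ}
    {B : Matrix ι κ ℝ} {C : Matrix κ ι ℝ} {Q R L : Matrix κ κ ℝ} {μ ε : ℝ} (hP : P.IsSymm)
    (x : ι → ℝ) (y : κ → ℝ)
    (hLMI : Sum.elim x y ⬝ᵥ (dissipationLMIMatrix A D P B C Q R L μ ε *ᵥ Sum.elim x y) ≤ 0) :
    storageRate P μ ε x (A *ᵥ x + B *ᵥ y)
      ≤ supplyRate Q L R (C *ᵥ x) y + x ⬝ᵥ ((P * D + Dᵀ * P) *ᵥ x) := by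
  rw [dissipationLMIMatrix, sumElim_dotProduct_fromBlocks_mulVec_sumElim] at hLMI
  simp only [storageRate, supplyRate, add_mulVec, sub_mulVec, smul_mulVec, one_mulVec,
    neg_mulVec, ← mulVec_mulVec, mulVec_add, mulVec_sub, dotProduct_add, dotProduct_sub,
    dotProduct_smul, dotProduct_neg, smul_eq_mul, dotProduct_transpose_mulVec] at hLMI ⊢
  rw [hP.mulVec_dotProduct, hP.mulVec_dotProduct, hP.mulVec_dotProduct, dotProduct_comm (L *ᵥ y),
    dotProduct_comm (Q *ᵥ _)] at hLMI
  rw [hP.mulVec_dotProduct]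
  linarith

theorem lmi_implies_differential_dissipation_general
    (n m : ℕ)
    (A D Pm : Matrix (Fin n) (Fin n) ℝ)
    (B : Matrix (Fin n) (Fin m) ℝ) (C : Matrix (Fin m) (Fin n) ℝ)
    (Q R L : Matrix (Fin m) (Fin m) ℝ)
    (hPm : Pm.IsSymm)
    (hPD : ∀ x : Fin n → ℝ, 0 ≤ x ⬝ᵥ ((Pm * D + Dᵀ * Pm) *ᵥ x))
    (μ ε : ℝ)
    (hLMI : ∀ z : Fin n ⊕ Fin m → ℝ,
      z ⬝ᵥ (Matrix.fromBlocks
        ((A - D)ᵀ * Pm + Pm * (A - D) + (2 * μ) • Pm - Cᵀ * Q * C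
          + ε • (1 : Matrix (Fin n) (Fin n) ℝ))
        (Pm * B - Cᵀ * L) (Bᵀ * Pm - Lᵀ * C) (-R) *ᵥ z) ≤ 0)
    (v : ℝ → Fin n → ℝ) (hv : ContDiff ℝ 2 v)
    (hvper : ∀ θ : ℝ, v (θ + 2 * Real.pi) = v θ)
    (hv'per : ∀ θ : ℝ, deriv v (θ + 2 * Real.pi) = deriv v θ)
    (hmean : ∫ θ in (0:ℝ)..(2 * Real.pi), v θ = 0)
    (u : ℝ → Fin m → ℝ) (hu : Continuous u) :
    (∫ θ in (0:ℝ)..(2 * Real.pi),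
      (2 * (v θ ⬝ᵥ (Pm *ᵥ (D *ᵥ deriv (deriv v) θ + A *ᵥ v θ + B *ᵥ u θ)))
        + 2 * μ * (v θ ⬝ᵥ (Pm *ᵥ v θ)) + ε * (v θ ⬝ᵥ v θ))) ≤
    ∫ θ in (0:ℝ)..(2 * Real.pi),
      ((C *ᵥ v θ) ⬝ᵥ (Q *ᵥ (C *ᵥ v θ)) + 2 * ((C *ᵥ v θ) ⬝ᵥ (L *ᵥ u θ))
        + u θ ⬝ᵥ (R *ᵥ u θ)) := by
  obtain ⟨hv_diff, -, hv'⟩ := (contDiff_succ_iff_deriv (n := 1)).mp hv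
  have hv_deriv (θ : ℝ) : HasDerivAt v (deriv v θ) θ := (hv_diff θ).hasDerivAt
  have hv'_deriv (θ : ℝ) : HasDerivAt (deriv v) (deriv (deriv v) θ) θ :=
    (hv'.differentiable one_ne_zero θ).hasDerivAt
  have hv_ends : v 0 = v (2 * Real.pi) := by simpa using (hvper 0).symm
  have hv'_ends : deriv v 0 = deriv v (2 * Real.pi) := by simpa using (hv'per 0).symm
  set S := Pm * D + Dᵀ * Pm
  have hS : S.PosSemidef := .of_dotProduct_mulVec_nonneg
    (by simp [S, IsHermitian, transpose_mul, hPm.eq, add_comm]) fun x => by simpa using hPD x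
  have hwirtinger := integral_dotProduct_mulVec_le_of_posSemidef hS Real.two_pi_pos hv_deriv
    hv'.continuous hv_ends hmean
  rw [sub_zero, div_self Real.two_pi_pos.ne', one_pow, one_mul] at hwirtinger
  have hcv := hv.continuous
  have hint {f : ℝ → ℝ} (hf : Continuous f) : IntervalIntegrable f volume 0 (2 * Real.pi) :=
    hf.intervalIntegrable _ _
  simp only [add_assoc (D *ᵥ _)]
  calc ∫ θ in (0:ℝ)..(2 * Real.pi),
        storageRate Pm μ ε (v θ) (D *ᵥ deriv (deriv v) θ + (A *ᵥ v θ + B *ᵥ u θ))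
      = -(∫ θ in (0:ℝ)..(2 * Real.pi), deriv v θ ⬝ᵥ (S *ᵥ deriv v θ))
          + ∫ θ in (0:ℝ)..(2 * Real.pi), storageRate Pm μ ε (v θ) (A *ᵥ v θ + B *ᵥ u θ) :=
        integral_storageRate_diffusion_add hPm μ ε hv_deriv hv'_deriv
          (hv'.continuous_deriv le_rfl) (by fun_prop) hv_ends hv'_ends
    _ ≤ -(∫ θ in (0:ℝ)..(2 * Real.pi), v θ ⬝ᵥ (S *ᵥ v θ))
          + ∫ θ in (0:ℝ)..(2 * Real.pi),
              (supplyRate Q L R (C *ᵥ v θ) (u θ) + v θ ⬝ᵥ (S *ᵥ v θ)) := by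
        refine add_le_add (neg_le_neg hwirtinger) (intervalIntegral.integral_mono_on
          Real.two_pi_pos.le (hint ?_) (hint ?_) fun θ _ =>
            storageRate_le_supplyRate_of_lmi hPm _ _ (hLMI _)) <;> fun_prop
    _ = ∫ θ in (0:ℝ)..(2 * Real.pi), supplyRate Q L R (C *ᵥ v θ) (u θ) := by
        rw [intervalIntegral.integral_add (hint (by fun_prop)) (hint (by fun_prop))]
        ring

/-- the LMIs (11)-(12) of the paper (with `λ₂ = 1`) imply the
uniform differential dissipation inequality for the linear diffusion-reaction
operator `v ↦ Dv'' + Av + Bu` on zero-mean `2π`-periodic functions, with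
supply rate `σ(y, w) = yᵀQy + 2yᵀLw + wᵀRw`. -/
theorem lmi_implies_differential_dissipation
    (n m : ℕ)
    (A D Pm : Matrix (Fin n) (Fin n) ℝ)
    (B : Matrix (Fin n) (Fin m) ℝ) (C : Matrix (Fin m) (Fin n) ℝ)
    (Q R L : Matrix (Fin m) (Fin m) ℝ)
    (hD : D.IsSymm) (hPm : Pm.IsSymm)
    (hPmpd : ∀ x : Fin n → ℝ, x ≠ 0 → 0 < x ⬝ᵥ (Pm *ᵥ x))
    (hPD : ∀ x : Fin n → ℝ, 0 ≤ x ⬝ᵥ ((Pm * D + Dᵀ * Pm) *ᵥ x))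
    (hQ : Q.IsSymm) (hR : R.IsSymm)
    (μ ε : ℝ) (hμ : 0 ≤ μ) (hε : 0 < ε)
    (hLMI : ∀ z : Fin n ⊕ Fin m → ℝ,
      z ⬝ᵥ (Matrix.fromBlocks
        ((A - D)ᵀ * Pm + Pm * (A - D) + (2 * μ) • Pm - Cᵀ * Q * C
          + ε • (1 : Matrix (Fin n) (Fin n) ℝ))
        (Pm * B - Cᵀ * L) (Bᵀ * Pm - Lᵀ * C) (-R) *ᵥ z) ≤ 0)
    (v : ℝ → Fin n → ℝ) (hv : ContDiff ℝ 2 v)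
    (hvper : ∀ θ : ℝ, v (θ + 2 * Real.pi) = v θ)
    (hv'per : ∀ θ : ℝ, deriv v (θ + 2 * Real.pi) = deriv v θ)
    (hmean : ∫ θ in (0:ℝ)..(2 * Real.pi), v θ = 0)
    (u : ℝ → Fin m → ℝ) (hu : Continuous u)
    (huper : ∀ θ : ℝ, u (θ + 2 * Real.pi) = u θ) :
    (∫ θ in (0:ℝ)..(2 * Real.pi),
      (2 * (v θ ⬝ᵥ (Pm *ᵥ (D *ᵥ deriv (deriv v) θ + A *ᵥ v θ + B *ᵥ u θ)))
        + 2 * μ * (v θ ⬝ᵥ (Pm *ᵥ v θ)) + ε * (v θ ⬝ᵥ v θ))) ≤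
    ∫ θ in (0:ℝ)..(2 * Real.pi),
      ((C *ᵥ v θ) ⬝ᵥ (Q *ᵥ (C *ᵥ v θ)) + 2 * ((C *ᵥ v θ) ⬝ᵥ (L *ᵥ u θ))
        + u θ ⬝ᵥ (R *ᵥ u θ)) :=
  lmi_implies_differential_dissipation_general n m A D Pm B C Q R L hPm hPD μ ε hLMI v hv hvper
    hv'per hmean u hu
end

section
/- Let Q, R be real symmetric m×m matrices with R positive semidefinite, and L a real m×m matrix. Let φ : ℝᵐ → ℝᵐ be continuously differentiable and satisfy the differential sector condition with (Q, L, R). Let y : [0, 2π] → ℝᵐ be continuous and set Ĵ := (1/(2π)) ∫₀^{2π} J_φ(y(θ)) dθ, where J_φ is the Jacobian of φ. Then the matrix [Iₘ; −Ĵ]ᵀ [[Q, L],[Lᵀ, R]] [Iₘ; −Ĵ] is negative semidefinite; equivalently, for every w ∈ ℝᵐ, wᵀQw − 2wᵀL Ĵ w + (Ĵw)ᵀ R (Ĵw) ≤ 0. -/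
/-!
For fixed `w`, the map `J ↦ wᵀQw − 2wᵀL(Jw) + (Jw)ᵀR(Jw)` is convex because `R` is positive
semidefinite, so the linear maps satisfying the sector inequality form a closed convex set.
An average of a function with values in a closed convex set stays in that set, and `Ĵ` is such an
average of pointwise Jacobians.
-/

open Matrix Set MeasureTheory

theorem convexOn_dotProduct_mulVec_self {𝕜 n : Type*} [Field 𝕜] [LinearOrder 𝕜]
    [IsStrictOrderedRing 𝕜] [Fintype n] {R : Matrix n n 𝕜}
    (hR : ∀ w : n → 𝕜, 0 ≤ w ⬝ᵥ (R *ᵥ w)) :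
    ConvexOn 𝕜 univ fun v : n → 𝕜 => v ⬝ᵥ (R *ᵥ v) := by
  refine ⟨convex_univ, fun x _ y _ a b ha hb hab => ?_⟩
  have gap : a * (x ⬝ᵥ (R *ᵥ x)) + b * (y ⬝ᵥ (R *ᵥ y))
      - (a • x + b • y) ⬝ᵥ (R *ᵥ (a • x + b • y))
      = a * b * ((x - y) ⬝ᵥ (R *ᵥ (x - y))) := by
    obtain rfl : b = 1 - a := by linarith
    simp only [mulVec_add, mulVec_sub, mulVec_smul, dotProduct_add, dotProduct_sub,
      add_dotProduct, sub_dotProduct, dotProduct_smul, smul_dotProduct, smul_eq_mul]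
    ring
  have := mul_nonneg (mul_nonneg ha hb) (hR (x - y))
  simp only [smul_eq_mul]
  linarith

theorem Convex.inv_sub_smul_intervalIntegral_mem {E : Type*} [NormedAddCommGroup E]
    [NormedSpace ℝ E] [CompleteSpace E] {s : Set E} (hs : Convex ℝ s) (hsc : IsClosed s)
    {f : ℝ → E} {a b : ℝ} (hab : a < b) (hf : IntervalIntegrable f volume a b)
    (hfs : ∀ x ∈ Ioc a b, f x ∈ s) : (b - a)⁻¹ • ∫ x in a..b, f x ∈ s := by
  rw [← interval_average_eq, uIoc_of_le hab.le]
  refine hs.set_average_mem hsc ?_ measure_Ioc_lt_top.ne ?_ ?_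
  · simpa using hab
  · exact (ae_restrict_iff' measurableSet_Ioc).2 (.of_forall hfs)
  · exact (intervalIntegrable_iff_integrableOn_Ioc_of_le hab.le).1 hf

section Sector

variable {n : Type*} [Fintype n] (Q L R : Matrix n n ℝ)

def sectorSet : Set ((n → ℝ) →L[ℝ] (n → ℝ)) :=
  {J | ∀ w, w ⬝ᵥ (Q *ᵥ w) - 2 * (w ⬝ᵥ (L *ᵥ J w)) + J w ⬝ᵥ (R *ᵥ J w) ≤ 0}

theorem isClosed_sectorSet : IsClosed (sectorSet Q L R) := by
  simp only [sectorSet, ofPred_forall]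
  exact isClosed_iInter fun w => isClosed_le (by fun_prop) continuous_const

variable {Q L R} in
theorem convex_sectorSet (hR : ∀ w : n → ℝ, 0 ≤ w ⬝ᵥ (R *ᵥ w)) :
    Convex ℝ (sectorSet Q L R) := by
  simp only [sectorSet, ofPred_forall]
  refine convex_iInter fun w => ?_
  have hg : ConvexOn ℝ univ
      fun v : n → ℝ => w ⬝ᵥ (Q *ᵥ w) - 2 * (w ⬝ᵥ (L *ᵥ v)) + v ⬝ᵥ (R *ᵥ v) :=
    ((convexOn_const _ convex_univ).sub
      (((2 : ℝ) • (dotProductBilin ℝ ℝ w ∘ₗ L.mulVecLin)).concaveOn convex_univ)).add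
      (convexOn_dotProduct_mulVec_self hR)
  simpa using (hg.comp_linearMap (ContinuousLinearMap.apply ℝ (n → ℝ) w).toLinearMap).convex_le 0

end Sector

theorem averaged_jacobian_sector_condition_general
    (m : ℕ) (Q R L : Matrix (Fin m) (Fin m) ℝ)
    (hRpsd : ∀ w : Fin m → ℝ, 0 ≤ w ⬝ᵥ (R *ᵥ w))
    (φ : (Fin m → ℝ) → Fin m → ℝ) (hφ : ContDiff ℝ 1 φ)
    (hsector : ∀ η w : Fin m → ℝ,
      w ⬝ᵥ (Q *ᵥ w) - 2 * (w ⬝ᵥ (L *ᵥ fderiv ℝ φ η w))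
        + fderiv ℝ φ η w ⬝ᵥ (R *ᵥ fderiv ℝ φ η w) ≤ 0)
    (y : ℝ → Fin m → ℝ) (hy : ContinuousOn y (Set.Icc 0 (2 * Real.pi))) :
    ∀ w : Fin m → ℝ,
      w ⬝ᵥ (Q *ᵥ w)
        - 2 * (w ⬝ᵥ (L *ᵥ
            (((2 * Real.pi)⁻¹ • ∫ θ in (0:ℝ)..(2 * Real.pi), fderiv ℝ φ (y θ)) w)))
        + (((2 * Real.pi)⁻¹ • ∫ θ in (0:ℝ)..(2 * Real.pi), fderiv ℝ φ (y θ)) w) ⬝ᵥ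
            (R *ᵥ (((2 * Real.pi)⁻¹ •
              ∫ θ in (0:ℝ)..(2 * Real.pi), fderiv ℝ φ (y θ)) w)) ≤ 0 := by
  have hJ : ContinuousOn (fun θ => fderiv ℝ φ (y θ)) (Icc 0 (2 * Real.pi)) :=
    (hφ.continuous_fderiv one_ne_zero).comp_continuousOn hy
  have hmem := (convex_sectorSet hRpsd).inv_sub_smul_intervalIntegral_mem
    (isClosed_sectorSet Q L R) Real.two_pi_pos
    (hJ.intervalIntegrable_of_Icc Real.two_pi_pos.le) fun θ _ => hsector (y θ)
  rwa [sub_zero] at hmem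

/-- inequality (19) of the paper: if `φ` is `C¹` and satisfies
the differential sector condition with `(Q, L, R)` (`Q, R` symmetric, `R`
positive semidefinite), then the spatially averaged Jacobian
`Ĵ = (1/(2π)) ∫₀^{2π} J_φ(y(θ)) dθ` satisfies the same quadratic constraint:
for every `w`, `wᵀQw − 2wᵀL(Ĵw) + (Ĵw)ᵀR(Ĵw) ≤ 0`. -/
theorem averaged_jacobian_sector_condition
    (m : ℕ) (Q R L : Matrix (Fin m) (Fin m) ℝ)
    (hQ : Q.IsSymm) (hR : R.IsSymm)
    (hRpsd : ∀ w : Fin m → ℝ, 0 ≤ w ⬝ᵥ (R *ᵥ w))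
    (φ : (Fin m → ℝ) → Fin m → ℝ) (hφ : ContDiff ℝ 1 φ)
    (hsector : ∀ η w : Fin m → ℝ,
      w ⬝ᵥ (Q *ᵥ w) - 2 * (w ⬝ᵥ (L *ᵥ fderiv ℝ φ η w))
        + fderiv ℝ φ η w ⬝ᵥ (R *ᵥ fderiv ℝ φ η w) ≤ 0)
    (y : ℝ → Fin m → ℝ) (hy : ContinuousOn y (Set.Icc 0 (2 * Real.pi))) :
    ∀ w : Fin m → ℝ,
      w ⬝ᵥ (Q *ᵥ w)
        - 2 * (w ⬝ᵥ (L *ᵥ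
            (((2 * Real.pi)⁻¹ • ∫ θ in (0:ℝ)..(2 * Real.pi), fderiv ℝ φ (y θ)) w)))
        + (((2 * Real.pi)⁻¹ • ∫ θ in (0:ℝ)..(2 * Real.pi), fderiv ℝ φ (y θ)) w) ⬝ᵥ
            (R *ᵥ (((2 * Real.pi)⁻¹ •
              ∫ θ in (0:ℝ)..(2 * Real.pi), fderiv ℝ φ (y θ)) w)) ≤ 0 :=
  averaged_jacobian_sector_condition_general m Q R L hRpsd φ hφ hsector y hy
end

section
/- Let D₁ > 0, D₂ > 0, a > 0, b > 0, ε > 0 and μ ≥ 0 be real numbers with μ < min{D₁, (b + D₂)/ε}. Then for every integer ζ with |ζ| ≥ 1 and every complex number s satisfying (s + ζ²D₁)(s + (b + ζ²D₂)/ε) + a/ε = 0, one has Re(s) < −μ. -/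
/-- pole location for the FitzHugh-Nagumo spatial modes,
Example 2 of the paper: if `0 ≤ μ < min{D₁, (b + D₂)/ε}`, then for every
integer `ζ` with `|ζ| ≥ 1`, all complex roots `s` of
`(s + ζ²D₁)(s + (b + ζ²D₂)/ε) + a/ε = 0` satisfy `Re(s) < −μ`. -/
theorem fitzhugh_nagumo_pole_location
    (D₁ D₂ a b ε μ : ℝ)
    (hD₁ : 0 < D₁) (hD₂ : 0 < D₂) (ha : 0 < a) (hb : 0 < b) (hε : 0 < ε)
    (hμ : 0 ≤ μ) (hμlt : μ < min D₁ ((b + D₂) / ε)) :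
    ∀ ζ : ℤ, 1 ≤ |ζ| → ∀ s : ℂ,
      (s + (ζ : ℂ) ^ 2 * (D₁ : ℂ)) *
          (s + ((b : ℂ) + (ζ : ℂ) ^ 2 * (D₂ : ℂ)) / (ε : ℂ)) + (a : ℂ) / (ε : ℂ) = 0 →
      s.re < -μ := by
  intro ζ hζ s hs
  have hζ2 : (1:ℝ) ≤ (ζ:ℝ)^2 := by
    have h : (1:ℤ) ≤ ζ^2 := by nlinarith [sq_abs ζ]
    exact_mod_cast h
  set p : ℝ := (ζ:ℝ)^2 * D₁ with hp
  set q : ℝ := (b + (ζ:ℝ)^2 * D₂) / ε with hq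
  have hεne : (ε:ℝ) ≠ 0 := ne_of_gt hε
  have hpμ : μ < p := by
    have h1 : μ < D₁ := lt_of_lt_of_le hμlt (min_le_left _ _)
    have : D₁ ≤ p := by rw [hp]; nlinarith
    linarith
  have hqμ : μ < q := by
    have h1 : μ < (b + D₂)/ε := lt_of_lt_of_le hμlt (min_le_right _ _)
    have h2 : (b + D₂)/ε ≤ q := by
      rw [hq]
      gcongr
      nlinarith
    linarith
  have hs' : (s + (p:ℂ)) * (s + (q:ℂ)) + ((a/ε : ℝ):ℂ) = 0 := by
    rw [hp, hq]
    push_cast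
    linear_combination hs
  by_contra hx
  push_neg at hx
  have him := congrArg Complex.im hs'
  have hre := congrArg Complex.re hs'
  simp [Complex.add_re, Complex.add_im, Complex.mul_re, Complex.mul_im] at him hre
  have hy : s.im = 0 := by
    rcases mul_eq_zero.mp (by linarith [him] : s.im * (s.re + p + (s.re + q)) = 0) with h | h
    · exact h
    · linarith
  rw [hy] at hre
  have haε : 0 < a/ε := div_pos ha hε
  nlinarith [hre, mul_pos (show (0:ℝ) < s.re + p by linarith) (show (0:ℝ) < s.re + q by linarith)]
end
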